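/- If X is a sober Q-cotopological space, then every irreducible fuzzy lower set φ in the specialization Q-ordered set Ω(X) has a supremum; indeed, the unique point a with φ̄ = (1_a)‾ is a supremum of φ. -/
import Mathlib


/-- A commutative and integral quantale: a complete lattice with a commutative
monoid operation `mul` whose unit is the top element, distributing over
arbitrary joins, together with its residuation `imp` characterized by the
adjoint property. -/
structure CIQuantale (Q : Type*) [CompleteLattice Q] where
  mul : Q → Q → Q
  mul_comm : ∀ p q : Q, mul p q = mul q p
  mul_assoc : ∀ p q r : Q, mul (mul p q) r = mul p (mul q r)
  mul_top : ∀ p : Q, mul p ⊤ = p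
  mul_sSup : ∀ (p : Q) (S : Set Q), mul p (sSup S) = ⨆ q ∈ S, mul p q
  imp : Q → Q → Q
  adj : ∀ p q r : Q, mul p q ≤ r ↔ q ≤ imp p r

namespace CIQuantale

variable {Q : Type*} [CompleteLattice Q] (𝒬 : CIQuantale Q) {X : Type*}

/-- The fuzzy inclusion order on `Q`-valued fuzzy sets. -/
def sub (A B : X → Q) : Q := ⨅ x, 𝒬.imp (A x) (B x)

/-- A `Q`-cotopology: contains all constants, closed under binary joins
and arbitrary meets. -/
def IsCotop (τ : Set (X → Q)) : Prop :=
  (∀ p : Q, (fun _ => p) ∈ τ) ∧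
  (∀ A B : X → Q, A ∈ τ → B ∈ τ → A ⊔ B ∈ τ) ∧
  (∀ S : Set (X → Q), S ⊆ τ → sInf S ∈ τ)

/-- Stratified: `p → A` is closed whenever `A` is closed. -/
def IsStratified (τ : Set (X → Q)) : Prop :=
  ∀ (p : Q) (A : X → Q), A ∈ τ → (fun x => 𝒬.imp p (A x)) ∈ τ

/-- Closure: the meet of all closed sets above `A`. -/
def cl (τ : Set (X → Q)) (A : X → Q) : X → Q :=
  sInf {B | B ∈ τ ∧ A ≤ B}

/-- Irreducible closed set. -/
def Irred (τ : Set (X → Q)) (F : X → Q) : Prop :=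
  F ∈ τ ∧ (⨆ x, F x) = ⊤ ∧
  ∀ A B : X → Q, A ∈ τ → B ∈ τ →
    𝒬.sub F (A ⊔ B) = 𝒬.sub F A ⊔ 𝒬.sub F B

/-- The fuzzy singleton `1ₓ`. -/
def pt [DecidableEq X] (x : X) : X → Q := fun y => if y = x then (⊤ : Q) else ⊥

/-- The specialization `Q`-order of a `Q`-cotopological space. -/
def specOrd (τ : Set (X → Q)) (x y : X) : Q := ⨅ A ∈ τ, 𝒬.imp (A y) (A x)

/-- Fuzzy lower set with respect to a `Q`-order `R`. -/
def FuzzyLower (R : X → X → Q) (φ : X → Q) : Prop :=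
  ∀ x y : X, 𝒬.mul (φ y) (R x y) ≤ φ x

/-- Irreducible fuzzy lower set. -/
def IrredLower (R : X → X → Q) (φ : X → Q) : Prop :=
  (⨆ x, φ x) = ⊤ ∧
  ∀ φ₁ φ₂ : X → Q, 𝒬.FuzzyLower R φ₁ → 𝒬.FuzzyLower R φ₂ →
    𝒬.sub φ (φ₁ ⊔ φ₂) = 𝒬.sub φ φ₁ ⊔ 𝒬.sub φ φ₂

/-- Pointwise negations of members of `τ`. -/
def negSet (τ : Set (X → Q)) : Set (X → Q) :=
  {U | ∃ A ∈ τ, U = fun x => 𝒬.imp (A x) ⊥}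

end CIQuantale

open CIQuantale

namespace CIQuantale

variable {Q : Type*} [CompleteLattice Q] (𝒬 : CIQuantale Q) {X : Type*}

lemma mul_mono_right {q q' : Q} (p : Q) (h : q ≤ q') : 𝒬.mul p q ≤ 𝒬.mul p q' :=
  (𝒬.adj _ _ _).mpr (h.trans ((𝒬.adj _ _ _).mp le_rfl))

lemma mul_imp_le (p r : Q) : 𝒬.mul p (𝒬.imp p r) ≤ r := (𝒬.adj _ _ _).mpr le_rfl

lemma imp_anti {p p' : Q} (r : Q) (h : p' ≤ p) : 𝒬.imp p r ≤ 𝒬.imp p' r := by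
  rw [← 𝒬.adj]
  calc 𝒬.mul p' (𝒬.imp p r) = 𝒬.mul (𝒬.imp p r) p' := 𝒬.mul_comm _ _
    _ ≤ 𝒬.mul (𝒬.imp p r) p := 𝒬.mul_mono_right _ h
    _ = 𝒬.mul p (𝒬.imp p r) := 𝒬.mul_comm _ _
    _ ≤ r := 𝒬.mul_imp_le _ _

lemma top_mul (q : Q) : 𝒬.mul ⊤ q = q := by rw [𝒬.mul_comm, 𝒬.mul_top]

lemma imp_top_left (r : Q) : 𝒬.imp ⊤ r = r :=
  le_antisymm (by
    have := 𝒬.mul_imp_le ⊤ r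
    rwa [𝒬.top_mul] at this)
    ((𝒬.adj _ _ _).mp (le_of_eq (𝒬.top_mul r)))

lemma imp_bot_left (r : Q) : 𝒬.imp ⊥ r = ⊤ :=
  le_antisymm le_top ((𝒬.adj _ _ _).mp (by rw [𝒬.mul_top]; exact bot_le))

/-- Every closed set is a fuzzy lower set w.r.t. the specialization order. -/
lemma closed_lower {τ : Set (X → Q)} {A : X → Q} (hA : A ∈ τ) :
    𝒬.FuzzyLower (𝒬.specOrd τ) A := by
  intro x y
  have h1 : 𝒬.specOrd τ x y ≤ 𝒬.imp (A y) (A x) := iInf₂_le A hA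
  exact (𝒬.mul_mono_right _ h1).trans (𝒬.mul_imp_le _ _)

lemma le_cl (τ : Set (X → Q)) (φ : X → Q) : φ ≤ cl τ φ :=
  le_sInf fun _ hB => hB.2

lemma cl_mem {τ : Set (X → Q)} (hτ : IsCotop τ) (φ : X → Q) : cl τ φ ∈ τ :=
  hτ.2.2 _ fun _ hB => hB.1

lemma cl_le {τ : Set (X → Q)} {B φ : X → Q} (hB : B ∈ τ) (h : φ ≤ B) :
    cl τ φ ≤ B := sInf_le ⟨hB, h⟩

/-- For a closed set `A`, `sub (cl φ) A = sub φ A` (uses stratification). -/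
lemma sub_cl {τ : Set (X → Q)} (hs : 𝒬.IsStratified τ) {A : X → Q} (hA : A ∈ τ)
    (φ : X → Q) : 𝒬.sub (cl τ φ) A = 𝒬.sub φ A := by
  apply le_antisymm
  · exact iInf_mono fun x => 𝒬.imp_anti _ (le_cl τ φ x)
  · set p := 𝒬.sub φ A with hp
    have hφB : φ ≤ fun x => 𝒬.imp p (A x) := by
      intro x
      rw [← 𝒬.adj, 𝒬.mul_comm, 𝒬.adj]
      exact iInf_le _ x
    have hcl : cl τ φ ≤ fun x => 𝒬.imp p (A x) := cl_le (hs p A hA) hφB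
    refine le_iInf fun x => ?_
    rw [← 𝒬.adj, 𝒬.mul_comm, 𝒬.adj]
    exact hcl x

lemma sub_pt [DecidableEq X] (a : X) (A : X → Q) : 𝒬.sub (pt a) A = A a := by
  apply le_antisymm
  · refine (iInf_le _ a).trans ?_
    rw [pt, if_pos rfl, 𝒬.imp_top_left]
  · refine le_iInf fun y => ?_
    by_cases h : y = a
    · subst h
      rw [pt, if_pos rfl, 𝒬.imp_top_left]
    · rw [pt]
      simp only [if_neg h, 𝒬.imp_bot_left]
      exact le_top

/-- In a stratified space, `specOrd τ x y = cl τ (pt y) x`. -/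
lemma specOrd_eq_cl_pt [DecidableEq X] {τ : Set (X → Q)}
    (hs : 𝒬.IsStratified τ) (x y : X) :
    𝒬.specOrd τ x y = cl τ (pt y) x := by
  apply le_antisymm
  · have h : (fun x => 𝒬.specOrd τ x y) ≤ cl τ (pt y) := by
      refine le_sInf fun B hB => fun z => ?_
      have hBy : B y = ⊤ := top_le_iff.mp (by
        have := hB.2 y
        rwa [pt, if_pos rfl] at this)
      have h1 : 𝒬.specOrd τ z y ≤ 𝒬.imp (B y) (B z) := iInf₂_le B hB.1
      rwa [hBy, 𝒬.imp_top_left] at h1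
    exact h x
  · refine le_iInf₂ fun A hA => ?_
    have hB : (fun z => 𝒬.imp (A y) (A z)) ∈ τ := hs (A y) A hA
    have hpt : pt y ≤ fun z => 𝒬.imp (A y) (A z) := by
      intro z
      by_cases h : z = y
      · subst h
        rw [pt, if_pos rfl, ← 𝒬.adj]
        exact le_of_eq (𝒬.mul_top _)
      · rw [pt, if_neg h]; exact bot_le
    exact cl_le hB hpt x

lemma cl_irred {τ : Set (X → Q)} (hτ : IsCotop τ) (hs : 𝒬.IsStratified τ)
    {φ : X → Q} (hirr : 𝒬.IrredLower (𝒬.specOrd τ) φ) :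
    𝒬.Irred τ (cl τ φ) := by
  refine ⟨cl_mem hτ φ, ?_, ?_⟩
  · refine le_antisymm le_top ?_
    rw [← hirr.1]
    exact iSup_mono fun x => le_cl τ φ x
  · intro A B hA hB
    rw [𝒬.sub_cl hs (hτ.2.1 A B hA hB), 𝒬.sub_cl hs hA, 𝒬.sub_cl hs hB,
      hirr.2 A B (𝒬.closed_lower hA) (𝒬.closed_lower hB)]

end CIQuantale

theorem stmt14 {Q : Type*} [CompleteLattice Q] (𝒬 : CIQuantale Q)
    {X : Type*} [DecidableEq X]
    (τ : Set (X → Q)) (hτ : IsCotop τ) (hs : 𝒬.IsStratified τ)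
    (hsober : ∀ F : X → Q, 𝒬.Irred τ F → ∃! x : X, F = cl τ (pt x))
    (φ : X → Q) (hlow : 𝒬.FuzzyLower (𝒬.specOrd τ) φ)
    (hirr : 𝒬.IrredLower (𝒬.specOrd τ) φ) :
    ∃ a : X, cl τ φ = cl τ (pt a) ∧
      ∀ x : X, 𝒬.specOrd τ a x = ⨅ z, 𝒬.imp (φ z) (𝒬.specOrd τ z x) := by
  obtain ⟨a, ha, -⟩ := hsober (cl τ φ) (𝒬.cl_irred hτ hs hirr)
  refine ⟨a, ha, fun x => ?_⟩
  have key : 𝒬.specOrd τ a x = 𝒬.sub φ (cl τ (pt x)) := by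
    calc 𝒬.specOrd τ a x = cl τ (pt x) a := 𝒬.specOrd_eq_cl_pt hs a x
      _ = 𝒬.sub (pt a) (cl τ (pt x)) := (𝒬.sub_pt a _).symm
      _ = 𝒬.sub (cl τ (pt a)) (cl τ (pt x)) :=
          (𝒬.sub_cl hs (cl_mem hτ (pt x)) (pt a)).symm
      _ = 𝒬.sub (cl τ φ) (cl τ (pt x)) := by rw [← ha]
      _ = 𝒬.sub φ (cl τ (pt x)) := 𝒬.sub_cl hs (cl_mem hτ (pt x)) φ
  rw [key, sub]
  exact iInf_congr fun z => by rw [𝒬.specOrd_eq_cl_pt hs z x]
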